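/- Let μ(A) = γ(m(A)) be a distorted Lebesgue measure with γ nondecreasing, concave, continuous, γ(0)=0. Then the Volterra–Choquet operator V: C[0,1] → C[0,1], V(f)(x) = (C)∫_{[0,x]} f dμ, is a compact nonlinear operator: it is continuous and maps bounded subsets of C[0,1] to relatively compact subsets of C[0,1]. -/

import Mathlib

open MeasureTheory Set Filter Topology

/-- The Choquet integral of `f` over `A` with respect to the set function `μ`:
`∫_0^∞ μ({f ≥ β} ∩ A) dβ + ∫_{-∞}^0 (μ({f ≥ β} ∩ A) - μ A) dβ`. -/
noncomputable def choquet {α : Type*} (μ : Set α → ℝ) (A : Set α) (f : α → ℝ) : ℝ :=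
  (∫ β in Ioi (0:ℝ), μ ({ω | β ≤ f ω} ∩ A)) +
  ∫ β in Iio (0:ℝ), (μ ({ω | β ≤ f ω} ∩ A) - μ A)

/-! For `|f| ≤ R` on `A`, the Choquet integral is the Lebesgue integral over `ℝ` of
`β ↦ μ({f ≥ β} ∩ A) - μ(A)·1_{β < 0}`, a bounded function vanishing outside `[-R, R]`, so
each claim reduces to a pointwise estimate of this integrand. Translating `β` by `δ` shows that
`V` is `γ(1)`-Lipschitz for the uniform norm. Moving `x` changes every level-set measure
`m({f ≥ β} ∩ [0, x])` by at most the length of the increment, so uniform continuity of `γ`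
makes `{V f : |f| ≤ R}` equicontinuous; with the bound `|V f| ≤ 2Rγ(1)`, Arzelà–Ascoli gives
the uniformly convergent subsequence. -/

open scoped Uniformity UniformConvergence

theorem EquicontinuousOn.exists_subseq_tendstoUniformlyOn {X α : Type*} [TopologicalSpace X]
    [UniformSpace α] [T2Space α] [IsCountablyGenerated (𝓤 α)] {K : Set X} (hK : IsCompact K)
    {F : ℕ → X → α} (hF : EquicontinuousOn F K) {Q : Set α} (hQ : IsCompact Q)
    (hFQ : ∀ n, ∀ x ∈ K, F n x ∈ Q) :
    ∃ (h : X → α) (φ : ℕ → ℕ), StrictMono φ ∧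
      TendstoUniformlyOn (F ∘ φ) h atTop K := by
  have : IsCountablyGenerated (𝓤 (X →ᵤ[{K}] α)) :=
    UniformOnFun.isCountablyGenerated_uniformity {K} (t := fun _ => K) (fun _ => rfl)
      monotone_const (by simp)
  let G : ℕ → X →ᵤ[{K}] α := UniformOnFun.ofFun {K} ∘ F
  have hcpt : IsCompact (closure (range G)) :=
    ArzelaAscoli.isCompact_closure_of_isClosedEmbedding (F := UniformOnFun.toFun {K})
      (by simpa using hK) IsClosedEmbedding.id
      (fun _ hK' => (mem_singleton_iff.1 hK').symm ▸ equicontinuousOn_iff_range.1 hF)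
      (by simpa [G] using fun x hx => ⟨Q, hQ, fun n => hFQ n x hx⟩)
  obtain ⟨h, -, φ, hφ, hlim⟩ :=
    hcpt.tendsto_subseq fun n => subset_closure (mem_range_self n)
  exact ⟨UniformOnFun.toFun {K} h, φ, hφ,
    UniformOnFun.tendsto_iff_tendstoUniformlyOn.1 hlim K rfl⟩

theorem abs_integral_le_of_eq_zero_of_notMem_Icc {φ : ℝ → ℝ} {R C : ℝ} (hR : 0 ≤ R)
    (h0 : ∀ β ∉ Icc (-R) R, φ β = 0) (hC : ∀ β, |φ β| ≤ C) :
    |∫ β, φ β| ≤ 2 * R * C := by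
  rw [← setIntegral_eq_integral_of_forall_compl_eq_zero h0]
  have := norm_setIntegral_le_of_norm_le_const (μ := volume) (s := Icc (-R) R) (by simp)
    fun β _ => (Real.norm_eq_abs _).trans_le (hC β)
  rw [Real.volume_real_Icc, max_eq_left (by linarith), Real.norm_eq_abs] at this
  linarith

section Choquet

variable {α : Type*} {μ : Set α → ℝ} {A : Set α} {f g : α → ℝ} {R : ℝ}

noncomputable def choquetIntegrand (μ : Set α → ℝ) (A : Set α) (f : α → ℝ) (β : ℝ) : ℝ :=
  μ ({ω | β ≤ f ω} ∩ A) - (Iio 0).indicator (fun _ => μ A) β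

theorem choquet_eq_integral_choquetIntegrand (h : Integrable (choquetIntegrand μ A f)) :
    choquet μ A f = ∫ β, choquetIntegrand μ A f β := by
  rw [← intervalIntegral.integral_Iio_add_Ici h.integrableOn h.integrableOn,
    integral_Ici_eq_integral_Ioi, choquet, add_comm]
  congr 1
  · refine setIntegral_congr_fun measurableSet_Iio fun β hβ => ?_
    simp [choquetIntegrand, indicator_of_mem hβ]
  · refine setIntegral_congr_fun measurableSet_Ioi fun β hβ => ?_
    rw [choquetIntegrand, indicator_of_notMem (notMem_Iio.2 (le_of_lt hβ)), sub_zero]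

theorem antitone_apply_superlevelSet_inter (hμ : MonotoneOn μ (𝒫 A)) :
    Antitone fun β => μ ({ω | β ≤ f ω} ∩ A) :=
  fun _ _ hβ => hμ inter_subset_right inter_subset_right
    (inter_subset_inter_left _ fun _ hω => hβ.trans hω)

theorem apply_inter_mem_Icc (hμ : MonotoneOn μ (𝒫 A)) (hμ0 : μ ∅ = 0) (s : Set α) :
    μ (s ∩ A) ∈ Icc 0 (μ A) :=
  ⟨hμ0 ▸ hμ (empty_subset A) inter_subset_right (empty_subset _),
    hμ inter_subset_right (subset_refl A) inter_subset_right⟩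

theorem abs_choquetIntegrand_le (hμ : MonotoneOn μ (𝒫 A)) (hμ0 : μ ∅ = 0) (β : ℝ) :
    |choquetIntegrand μ A f β| ≤ μ A := by
  obtain ⟨h0, hA⟩ := apply_inter_mem_Icc hμ hμ0 {ω | β ≤ f ω}
  by_cases hβ : β < 0 <;>
    simp only [choquetIntegrand, hβ, indicator_of_mem, indicator_of_notMem, mem_Iio,
      not_false_eq_true] <;>
    rw [abs_le] <;> constructor <;> linarith

theorem choquetIntegrand_eq_zero_of_notMem_Icc (hμ0 : μ ∅ = 0) (hR : 0 ≤ R)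
    (hf : ∀ ω ∈ A, |f ω| ≤ R) {β : ℝ} (hβ : β ∉ Icc (-R) R) : choquetIntegrand μ A f β = 0 := by
  rcases not_and_or.1 hβ with hβ | hβ <;> rw [not_le] at hβ
  · have hA : {ω | β ≤ f ω} ∩ A = A := inter_eq_right.2 fun ω hω =>
      (lt_of_lt_of_le hβ (neg_le_of_abs_le (hf ω hω))).le
    simp [choquetIntegrand, hA, indicator_of_mem (show β ∈ Iio 0 by simp; linarith)]
  · have hA : {ω | β ≤ f ω} ∩ A = ∅ := eq_empty_of_forall_notMem fun ω ⟨hβω, hω⟩ =>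
      (lt_of_le_of_lt (le_of_abs_le (hf ω hω)) hβ).not_ge hβω
    simp [choquetIntegrand, hA, hμ0, indicator_of_notMem (show β ∉ Iio 0 by simp; linarith)]

theorem integrable_choquetIntegrand (hμ : MonotoneOn μ (𝒫 A)) (hμ0 : μ ∅ = 0) (hR : 0 ≤ R)
    (hf : ∀ ω ∈ A, |f ω| ≤ R) : Integrable (choquetIntegrand μ A f) := by
  have hmeas : Measurable (choquetIntegrand μ A f) :=
    (antitone_apply_superlevelSet_inter hμ).measurable.sub
      (measurable_const.indicator measurableSet_Iio)
  refine IntegrableOn.integrable_of_forall_notMem_eq_zero (s := Icc (-R) R) ?_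
    fun β hβ => choquetIntegrand_eq_zero_of_notMem_Icc hμ0 hR hf hβ
  exact Measure.integrableOn_of_bounded (by simp) hmeas.aestronglyMeasurable
    (ae_of_all _ fun β => abs_choquetIntegrand_le hμ hμ0 β)

theorem abs_choquet_le (hμ : MonotoneOn μ (𝒫 A)) (hμ0 : μ ∅ = 0) (hR : 0 ≤ R)
    (hf : ∀ ω ∈ A, |f ω| ≤ R) : |choquet μ A f| ≤ 2 * R * μ A := by
  rw [choquet_eq_integral_choquetIntegrand (integrable_choquetIntegrand hμ hμ0 hR hf)]
  exact abs_integral_le_of_eq_zero_of_notMem_Icc hR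
    (fun _ hβ => choquetIntegrand_eq_zero_of_notMem_Icc hμ0 hR hf hβ)
    (abs_choquetIntegrand_le hμ hμ0)

theorem abs_choquet_sub_choquet_le_of_subset {B : Set α} (hAB : A ⊆ B)
    (hμ : MonotoneOn μ (𝒫 B)) (hμ0 : μ ∅ = 0) (hR : 0 ≤ R) (hf : ∀ ω ∈ B, |f ω| ≤ R)
    {ε : ℝ} (hε : ∀ s, μ (s ∩ B) - μ (s ∩ A) ≤ ε) :
    |choquet μ B f - choquet μ A f| ≤ 2 * R * ε := by
  have hfA : ∀ ω ∈ A, |f ω| ≤ R := fun ω hω => hf ω (hAB hω)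
  have hIB := integrable_choquetIntegrand hμ hμ0 hR hf
  have hIA := integrable_choquetIntegrand (hμ.mono (powerset_mono.2 hAB)) hμ0 hR hfA
  rw [choquet_eq_integral_choquetIntegrand hIB, choquet_eq_integral_choquetIntegrand hIA,
    ← integral_sub hIB hIA]
  refine abs_integral_le_of_eq_zero_of_notMem_Icc hR (fun β hβ => ?_) (fun β => ?_)
  · simp [choquetIntegrand_eq_zero_of_notMem_Icc hμ0 hR hf hβ,
      choquetIntegrand_eq_zero_of_notMem_Icc hμ0 hR hfA hβ]
  · set S := {ω | β ≤ f ω}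
    -- both `μ (S ∩ B) - μ (S ∩ A)` and `μ B - μ A` lie in `[0, ε]`
    have hS₀ : μ (S ∩ A) ≤ μ (S ∩ B) :=
      hμ (inter_subset_right.trans hAB) inter_subset_right (inter_subset_inter_right _ hAB)
    have hB₀ : μ A ≤ μ B := hμ hAB (subset_refl B) hAB
    have hS := hε S
    have hB := hε univ
    rw [univ_inter, univ_inter] at hB
    by_cases hβ : β < 0 <;> simp only [choquetIntegrand, hβ, indicator_of_mem,
      indicator_of_notMem, mem_Iio, not_false_eq_true] <;>
      rw [abs_le] <;> constructor <;> linarith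

theorem choquet_le_choquet_add (hμ : MonotoneOn μ (𝒫 A)) (hμ0 : μ ∅ = 0) (hR : 0 ≤ R)
    (hf : ∀ ω ∈ A, |f ω| ≤ R) (hg : ∀ ω ∈ A, |g ω| ≤ R) {δ : ℝ} (hδ : 0 ≤ δ)
    (hgf : ∀ ω ∈ A, g ω ≤ f ω + δ) : choquet μ A g ≤ choquet μ A f + δ * μ A := by
  have hIf := integrable_choquetIntegrand hμ hμ0 hR hf
  have hIg := integrable_choquetIntegrand hμ hμ0 hR hg
  have hJ : Integrable ((Ico 0 δ).indicator fun _ => μ A) :=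
    (integrable_indicator_iff measurableSet_Ico).2 (integrableOn_const (by simp))
  rw [choquet_eq_integral_choquetIntegrand hIg, choquet_eq_integral_choquetIntegrand hIf]
  calc ∫ β, choquetIntegrand μ A g β
      ≤ ∫ β, (choquetIntegrand μ A f (β - δ) + (Ico 0 δ).indicator (fun _ => μ A) β) := by
        refine integral_mono hIg ((hIf.comp_sub_right δ).add hJ) fun β => ?_
        have hlevel : μ ({ω | β ≤ g ω} ∩ A) ≤ μ ({ω | β - δ ≤ f ω} ∩ A) :=
          hμ inter_subset_right inter_subset_right fun ω ⟨hω, hωA⟩ =>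
            ⟨show β - δ ≤ f ω by linarith [hgf ω hωA, show β ≤ g ω from hω], hωA⟩
        -- the indicator of `[0, δ)` absorbs the shift of the correction term `μ A · 1_{β < 0}`
        simp only [choquetIntegrand, indicator_apply, mem_Iio, mem_Ico]
        split_ifs <;> grind
    _ = (∫ β, choquetIntegrand μ A f β) + δ * μ A := by
        rw [integral_add (hIf.comp_sub_right δ) hJ, integral_sub_right_eq_self,
          integral_indicator_const _ measurableSet_Ico, Real.volume_real_Ico, sub_zero,
          max_eq_left hδ, smul_eq_mul]

theorem abs_choquet_sub_choquet_le (hμ : MonotoneOn μ (𝒫 A)) (hμ0 : μ ∅ = 0) (hR : 0 ≤ R)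
    (hf : ∀ ω ∈ A, |f ω| ≤ R) {δ : ℝ} (hδ : 0 ≤ δ) (hfg : ∀ ω ∈ A, |f ω - g ω| ≤ δ) :
    |choquet μ A f - choquet μ A g| ≤ δ * μ A := by
  have hf' : ∀ ω ∈ A, |f ω| ≤ R + δ := fun ω hω => by linarith [hf ω hω]
  have hg : ∀ ω ∈ A, |g ω| ≤ R + δ := fun ω hω => by
    linarith [hf ω hω, hfg ω hω, abs_sub_abs_le_abs_sub (g ω) (f ω), abs_sub_comm (f ω) (g ω)]
  have hR' : 0 ≤ R + δ := by linarith
  rw [abs_sub_le_iff]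
  constructor
  · linarith [choquet_le_choquet_add hμ hμ0 hR' hg hf' hδ fun ω hω =>
      by linarith [(abs_le.1 (hfg ω hω)).2]]
  · linarith [choquet_le_choquet_add hμ hμ0 hR' hf' hg hδ fun ω hω =>
      by linarith [(abs_le.1 (hfg ω hω)).1]]

end Choquet

theorem monotoneOn_distortedMeasure {β : Type*} [MeasurableSpace β] {ν : Measure β} {γ : ℝ → ℝ}
    {A : Set β} (hγ : MonotoneOn γ (Icc 0 1)) (hA : ν A ≤ 1) :
    MonotoneOn (fun s => γ (ν s).toReal) (𝒫 A) := by
  intro s hs t ht hst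
  have hνt : ν t ≤ 1 := (measure_mono ht).trans hA
  have hνs : ν s ≤ 1 := (measure_mono hs).trans hA
  exact hγ
    ⟨ENNReal.toReal_nonneg, ENNReal.toReal_le_of_le_ofReal zero_le_one (by simpa using hνs)⟩
    ⟨ENNReal.toReal_nonneg, ENNReal.toReal_le_of_le_ofReal zero_le_one (by simpa using hνt)⟩
    (ENNReal.toReal_mono (ne_top_of_le_ne_top ENNReal.one_ne_top hνt) (measure_mono hst))

theorem toReal_volume_inter_Icc_mem (s : Set ℝ) {x : ℝ} (hx : x ∈ Icc (0:ℝ) 1) :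
    (volume (s ∩ Icc 0 x)).toReal ∈ Icc (0:ℝ) 1 := by
  refine ⟨ENNReal.toReal_nonneg, ENNReal.toReal_le_of_le_ofReal zero_le_one ?_⟩
  calc volume (s ∩ Icc 0 x) ≤ volume (Icc 0 x) := measure_mono inter_subset_right
    _ ≤ ENNReal.ofReal 1 := by
      rw [Real.volume_Icc, sub_zero]
      exact ENNReal.ofReal_le_ofReal hx.2

theorem toReal_volume_inter_Icc_sub_le (s : Set ℝ) {x y : ℝ} (hxy : x ≤ y) :
    (volume (s ∩ Icc 0 y)).toReal - (volume (s ∩ Icc 0 x)).toReal ≤ y - x := by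
  have hsub : s ∩ Icc 0 y ⊆ (s ∩ Icc 0 x) ∪ Ioc x y := fun ω ⟨hω, h0, hy⟩ =>
    (le_or_gt ω x).imp (fun hx => ⟨hω, h0, hx⟩) fun hx => ⟨hx, hy⟩
  have hfin : volume (s ∩ Icc 0 x) ≠ ⊤ :=
    ne_top_of_le_ne_top (by simp) (measure_mono (μ := volume) inter_subset_right)
  have := ENNReal.toReal_mono (ENNReal.add_ne_top.2 ⟨hfin, by simp⟩)
    ((measure_mono (μ := volume) hsub).trans (measure_union_le _ _))
  rw [ENNReal.toReal_add hfin (by simp), Real.volume_Ioc, ENNReal.toReal_ofReal (by linarith)]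
    at this
  linarith

theorem exists_abs_le_of_continuousOn_Icc {f : ℝ → ℝ} (hf : ContinuousOn f (Icc 0 1)) :
    ∃ R, 0 ≤ R ∧ ∀ x ∈ Icc (0:ℝ) 1, |f x| ≤ R := by
  obtain ⟨R, hR⟩ := isCompact_Icc.exists_bound_of_continuousOn hf
  exact ⟨R, (norm_nonneg _).trans (hR 0 ⟨le_rfl, zero_le_one⟩), hR⟩

noncomputable def volterraChoquet (γ f : ℝ → ℝ) (x : ℝ) : ℝ :=
  choquet (fun A => γ (volume A).toReal) (Icc 0 x) f

section Volterra

variable {γ f g : ℝ → ℝ} {R : ℝ}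

theorem volume_Icc_zero_le_one {x : ℝ} (hx : x ≤ 1) : volume (Icc 0 x) ≤ 1 := by
  rw [Real.volume_Icc, sub_zero]
  exact ENNReal.ofReal_le_one.2 hx

theorem abs_volterraChoquet_le (hγ : MonotoneOn γ (Icc 0 1)) (hγ0 : γ 0 = 0) (hR : 0 ≤ R)
    (hf : ∀ x ∈ Icc (0:ℝ) 1, |f x| ≤ R) {x : ℝ} (hx : x ∈ Icc (0:ℝ) 1) :
    |volterraChoquet γ f x| ≤ 2 * R * γ 1 := by
  have h := abs_choquet_le (monotoneOn_distortedMeasure hγ (volume_Icc_zero_le_one hx.2))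
    (by simp [hγ0]) hR fun ω hω => hf ω ⟨hω.1, hω.2.trans hx.2⟩
  rw [Real.volume_Icc, sub_zero, ENNReal.toReal_ofReal hx.1] at h
  exact h.trans (mul_le_mul_of_nonneg_left (hγ hx ⟨zero_le_one, le_rfl⟩ hx.2) (by positivity))

theorem abs_volterraChoquet_sub_le (hγ : MonotoneOn γ (Icc 0 1)) (hγ0 : γ 0 = 0) (hR : 0 ≤ R)
    (hf : ∀ x ∈ Icc (0:ℝ) 1, |f x| ≤ R) {δ : ℝ} (hδ : 0 ≤ δ)
    (hfg : ∀ x ∈ Icc (0:ℝ) 1, |f x - g x| ≤ δ) {x : ℝ} (hx : x ∈ Icc (0:ℝ) 1) :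
    |volterraChoquet γ f x - volterraChoquet γ g x| ≤ δ * γ 1 := by
  have h := abs_choquet_sub_choquet_le
    (monotoneOn_distortedMeasure hγ (volume_Icc_zero_le_one hx.2)) (by simp [hγ0]) hR
    (fun ω hω => hf ω ⟨hω.1, hω.2.trans hx.2⟩) hδ fun ω hω => hfg ω ⟨hω.1, hω.2.trans hx.2⟩
  rw [Real.volume_Icc, sub_zero, ENNReal.toReal_ofReal hx.1] at h
  exact h.trans (mul_le_mul_of_nonneg_left (hγ hx ⟨zero_le_one, le_rfl⟩ hx.2) hδ)

theorem exists_pos_abs_volterraChoquet_sub_lt (hγ : MonotoneOn γ (Icc 0 1))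
    (hγc : ContinuousOn γ (Icc 0 1)) (hγ0 : γ 0 = 0) (hR : 0 ≤ R) {ε : ℝ} (hε : 0 < ε) :
    ∃ η > 0, ∀ f : ℝ → ℝ, (∀ x ∈ Icc (0:ℝ) 1, |f x| ≤ R) → ∀ x ∈ Icc (0:ℝ) 1,
      ∀ y ∈ Icc (0:ℝ) 1, x ≤ y → y - x < η →
        |volterraChoquet γ f y - volterraChoquet γ f x| < ε := by
  obtain ⟨η, hη, hγη⟩ := Metric.uniformContinuousOn_iff.1
    (isCompact_Icc.uniformContinuousOn_of_continuous hγc) (ε / (2 * R + 1)) (by positivity)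
  refine ⟨η, hη, fun f hf x hx y hy hxy hyx => ?_⟩
  have hdistort (s : Set ℝ) :
      γ (volume (s ∩ Icc 0 y)).toReal - γ (volume (s ∩ Icc 0 x)).toReal ≤ ε / (2 * R + 1) := by
    have hmono : (volume (s ∩ Icc 0 x)).toReal ≤ (volume (s ∩ Icc 0 y)).toReal :=
      ENNReal.toReal_mono (ne_top_of_le_ne_top (by simp) (measure_mono inter_subset_right))
        (measure_mono (inter_subset_inter_right _ (Icc_subset_Icc_right hxy)))
    have hclose := toReal_volume_inter_Icc_sub_le s hxy
    refine (le_abs_self _).trans (hγη _ (toReal_volume_inter_Icc_mem s hy) _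
      (toReal_volume_inter_Icc_mem s hx) ?_).le
    rw [Real.dist_eq, abs_of_nonneg (by linarith)]
    linarith
  calc |volterraChoquet γ f y - volterraChoquet γ f x| ≤ 2 * R * (ε / (2 * R + 1)) :=
        abs_choquet_sub_choquet_le_of_subset (Icc_subset_Icc_right hxy)
          (monotoneOn_distortedMeasure hγ (volume_Icc_zero_le_one hy.2)) (by simp [hγ0]) hR
          (fun ω hω => hf ω ⟨hω.1, hω.2.trans hy.2⟩) hdistort
    _ < ε := by
        rw [mul_div_assoc', div_lt_iff₀ (by positivity)]
        linarith

theorem equicontinuousOn_volterraChoquet (hγ : MonotoneOn γ (Icc 0 1))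
    (hγc : ContinuousOn γ (Icc 0 1)) (hγ0 : γ 0 = 0) (hR : 0 ≤ R) {ι : Type*}
    {u : ι → ℝ → ℝ} (hu : ∀ i, ∀ x ∈ Icc (0:ℝ) 1, |u i x| ≤ R) :
    EquicontinuousOn (fun i => volterraChoquet γ (u i)) (Icc 0 1) := by
  intro x hx U hU
  obtain ⟨ε, hε, hεU⟩ := Metric.mem_uniformity_dist.1 hU
  obtain ⟨η, hη, hV⟩ := exists_pos_abs_volterraChoquet_sub_lt hγ hγc hγ0 hR hε
  filter_upwards [inter_mem_nhdsWithin (Icc 0 1) (Metric.ball_mem_nhds x hη)]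
    with y ⟨hy, hxy⟩ i
  rw [Metric.mem_ball, Real.dist_eq] at hxy
  refine hεU ?_
  rw [Real.dist_eq]
  rcases le_total x y with h | h
  · rw [abs_sub_comm]
    exact hV _ (hu i) x hx y hy h (by linarith [le_abs_self (y - x)])
  · exact hV _ (hu i) y hy x hx h (by linarith [neg_abs_le (y - x)])

end Volterra

theorem volterraChoquet_compact_C_general (γ : ℝ → ℝ)
    (hγmono : MonotoneOn γ (Icc 0 1))
    (hγcont : ContinuousOn γ (Icc 0 1)) (hγ0 : γ 0 = 0) :
    (∀ f : ℝ → ℝ, ContinuousOn f (Icc 0 1) →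
      ContinuousOn (fun x => choquet (fun A => γ (volume A).toReal) (Icc 0 x) f)
        (Icc 0 1)) ∧
    (∀ f : ℝ → ℝ, ContinuousOn f (Icc 0 1) → ∀ ε > (0:ℝ), ∃ δ > (0:ℝ),
      ∀ g : ℝ → ℝ, ContinuousOn g (Icc 0 1) →
      (∀ s ∈ Icc (0:ℝ) 1, |f s - g s| < δ) →
      ∀ x ∈ Icc (0:ℝ) 1,
        |choquet (fun A => γ (volume A).toReal) (Icc 0 x) f
          - choquet (fun A => γ (volume A).toReal) (Icc 0 x) g| < ε) ∧
    (∀ R : ℝ, ∀ u : ℕ → ℝ → ℝ,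
      (∀ n, ContinuousOn (u n) (Icc 0 1)) →
      (∀ n, ∀ x ∈ Icc (0:ℝ) 1, |u n x| ≤ R) →
      ∃ (h : ℝ → ℝ) (φ : ℕ → ℕ), StrictMono φ ∧
        TendstoUniformlyOn
          (fun n x => choquet (fun A => γ (volume A).toReal) (Icc 0 x) (u (φ n)))
          h atTop (Icc 0 1)) := by
  refine ⟨fun f hf => ?_, fun f hf ε hε => ?_, fun R u _ hu => ?_⟩
  · obtain ⟨R, hR, hfR⟩ := exists_abs_le_of_continuousOn_Icc hf
    exact (equicontinuousOn_volterraChoquet hγmono hγcont hγ0 (u := fun _ : Unit => f) hR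
      fun _ => hfR).continuousOn ()
  · obtain ⟨R, hR, hfR⟩ := exists_abs_le_of_continuousOn_Icc hf
    have hγ1 : 0 ≤ γ 1 := hγ0 ▸ hγmono ⟨le_rfl, zero_le_one⟩ ⟨zero_le_one, le_rfl⟩ zero_le_one
    refine ⟨ε / (γ 1 + 1), by positivity, fun g _ hfg x hx => ?_⟩
    calc _ ≤ ε / (γ 1 + 1) * γ 1 :=
          abs_volterraChoquet_sub_le hγmono hγ0 hR hfR (by positivity)
            (fun s hs => (hfg s hs).le) hx
      _ < ε := by
          rw [div_mul_eq_mul_div, div_lt_iff₀ (by positivity)]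
          linarith
  · have hR : 0 ≤ R := (abs_nonneg _).trans (hu 0 0 ⟨le_rfl, zero_le_one⟩)
    exact (equicontinuousOn_volterraChoquet hγmono hγcont hγ0 hR hu
      ).exists_subseq_tendstoUniformlyOn isCompact_Icc isCompact_Icc
      fun n x hx => abs_le.1 (abs_volterraChoquet_le hγmono hγ0 hR (hu n) hx)

/-- For a distorted Lebesgue measure `μ(A) = γ(m(A))` (`γ` nondecreasing, concave,
continuous, `γ(0)=0`), the Volterra–Choquet operator `V : C[0,1] → C[0,1]`,
`V(f)(x) = (C)∫_{[0,x]} f dμ`, is a compact nonlinear operator: each `V(f)` is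
continuous, `V` is continuous for the uniform norm, and the image of every bounded
subset of `C[0,1]` is relatively compact, i.e. every uniformly bounded sequence of
continuous functions has a subsequence whose image under `V` converges uniformly. -/
theorem volterraChoquet_compact_C (γ : ℝ → ℝ)
    (hγmono : MonotoneOn γ (Icc 0 1)) (hγconc : ConcaveOn ℝ (Icc 0 1) γ)
    (hγcont : ContinuousOn γ (Icc 0 1)) (hγ0 : γ 0 = 0) :
    (∀ f : ℝ → ℝ, ContinuousOn f (Icc 0 1) →
      ContinuousOn (fun x => choquet (fun A => γ (volume A).toReal) (Icc 0 x) f)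
        (Icc 0 1)) ∧
    (∀ f : ℝ → ℝ, ContinuousOn f (Icc 0 1) → ∀ ε > (0:ℝ), ∃ δ > (0:ℝ),
      ∀ g : ℝ → ℝ, ContinuousOn g (Icc 0 1) →
      (∀ s ∈ Icc (0:ℝ) 1, |f s - g s| < δ) →
      ∀ x ∈ Icc (0:ℝ) 1,
        |choquet (fun A => γ (volume A).toReal) (Icc 0 x) f
          - choquet (fun A => γ (volume A).toReal) (Icc 0 x) g| < ε) ∧
    (∀ R : ℝ, ∀ u : ℕ → ℝ → ℝ,
      (∀ n, ContinuousOn (u n) (Icc 0 1)) →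
      (∀ n, ∀ x ∈ Icc (0:ℝ) 1, |u n x| ≤ R) →
      ∃ (h : ℝ → ℝ) (φ : ℕ → ℕ), StrictMono φ ∧
        TendstoUniformlyOn
          (fun n x => choquet (fun A => γ (volume A).toReal) (Icc 0 x) (u (φ n)))
          h atTop (Icc 0 1)) :=
  volterraChoquet_compact_C_general γ hγmono hγcont hγ0
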